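/- arXiv:2202.02495 — 2 statements merged into one kernel-verified Lean document; each statement's English description precedes it below -/
import Mathlib

section
/- For every integer k ≥ 0, the Weisfeiler–Lehman distance of depth k is a pseudo-distance on the collection of Z-LMMCs: d_WL^(k) is nonnegative, symmetric, vanishes on every pair of isomorphic Z-LMMCs, and satisfies the triangle inequality d_WL^(k)((𝒳,ℓ_X),(𝒲,ℓ_W)) ≤ d_WL^(k)((𝒳,ℓ_X),(𝒴,ℓ_Y)) + d_WL^(k)((𝒴,ℓ_Y),(𝒲,ℓ_W)) for all Z-LMMCs; consequently the absolute WL distance d_WL = sup_{k≥0} d_WL^(k) has the same three properties. -/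
open scoped BigOperators NNReal

namespace WLGW

variable {X Y W : Type*}

/-- A probability mass function on a finite type. -/
def IsPMF [Fintype X] (p : X → ℝ) : Prop :=
  (∀ x, 0 ≤ p x) ∧ ∑ x, p x = 1

/-- `γ` is a coupling of `p` and `q`. -/
def IsCoupling [Fintype X] [Fintype Y] (p : X → ℝ) (q : Y → ℝ) (γ : X → Y → ℝ) : Prop :=
  (∀ x y, 0 ≤ γ x y) ∧ (∀ x, ∑ y, γ x y = p x) ∧ (∀ y, ∑ x, γ x y = q y)

/-- `(m, μ)` is a measure Markov chain: each `m x` is a pmf, and `μ` is a fully supported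
stationary pmf. -/
def IsMMC [Fintype X] (m : X → X → ℝ) (μ : X → ℝ) : Prop :=
  (∀ x, IsPMF (m x)) ∧ IsPMF μ ∧ (∀ x, 0 < μ x) ∧ (∀ x', ∑ x, m x x' * μ x = μ x')

/-- `dX` is a metric on the finite type `X`. -/
def IsMetricOn [Fintype X] (dX : X → X → ℝ) : Prop :=
  (∀ x, dX x x = 0) ∧ (∀ x y, dX x y = dX y x) ∧ (∀ x y, x ≠ y → 0 < dX x y) ∧
    (∀ x y z, dX x z ≤ dX x y + dX y z)

/-- The iterated Weisfeiler–Lehman cost `D_k`. -/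
noncomputable def costIter [Fintype X] [Fintype Y] (mX : X → X → ℝ) (mY : Y → Y → ℝ)
    (D0 : X → Y → ℝ) : ℕ → X → Y → ℝ
  | 0 => D0
  | k + 1 => fun x y => sInf {r : ℝ | ∃ γ : X → Y → ℝ, IsCoupling (mX x) (mY y) γ ∧
      r = ∑ x', ∑ y', costIter mX mY D0 k x' y' * γ x' y'}

/-- The Weisfeiler–Lehman distance of depth `k` between two labeled measure Markov chains. -/
noncomputable def dWL {Z : Type*} [PseudoMetricSpace Z] [Fintype X] [Fintype Y]
    (mX : X → X → ℝ) (μX : X → ℝ) (ℓX : X → Z)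
    (mY : Y → Y → ℝ) (μY : Y → ℝ) (ℓY : Y → Z) (k : ℕ) : ℝ :=
  sInf {r : ℝ | ∃ γ : X → Y → ℝ, IsCoupling μX μY γ ∧
      r = ∑ x, ∑ y, costIter mX mY (fun x y => dist (ℓX x) (ℓY y)) k x y * γ x y}

/-- The absolute Weisfeiler–Lehman distance. -/
noncomputable def dWLsup {Z : Type*} [PseudoMetricSpace Z] [Fintype X] [Fintype Y]
    (mX : X → X → ℝ) (μX : X → ℝ) (ℓX : X → Z)
    (mY : Y → Y → ℝ) (μY : Y → ℝ) (ℓY : Y → Z) : ℝ :=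
  ⨆ k : ℕ, dWL mX μX ℓX mY μY ℓY k

/-- Isomorphism of labeled measure Markov chains. -/
def LMMCIso {Z : Type*} [Fintype X] [Fintype Y]
    (mX : X → X → ℝ) (μX : X → ℝ) (ℓX : X → Z)
    (mY : Y → Y → ℝ) (μY : Y → ℝ) (ℓY : Y → Z) : Prop :=
  ∃ ψ : X ≃ Y, (∀ x, ℓY (ψ x) = ℓX x) ∧ (∀ x x', mY (ψ x) (ψ x') = mX x x') ∧
    (∀ x, μY (ψ x) = μX x)

/-- The `q`-Markov kernel of a finite simple graph. -/
noncomputable def graphKernel {V : Type*} [Fintype V] [DecidableEq V] (G : SimpleGraph V) [DecidableRel G.Adj]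
    (q : ℝ) (v v' : V) : ℝ :=
  if G.degree v = 0 then (if v' = v then 1 else 0)
  else (if v' = v then q else 0) + (if G.Adj v v' then (1 - q) / (G.degree v : ℝ) else 0)

/-- The stationary degree measure of a finite simple graph. -/
noncomputable def graphMu {V : Type*} [Fintype V] (G : SimpleGraph V) [DecidableRel G.Adj]
    (v : V) : ℝ :=
  ((max (G.degree v) 1 : ℕ) : ℝ) / ∑ v', ((max (G.degree v') 1 : ℕ) : ℝ)

/-- The type of depth-`k` Weisfeiler–Lehman labels over an initial label set `Z`. -/
def WLType (Z : Type*) : ℕ → Type _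
  | 0 => Z
  | k + 1 => WLType Z k × Multiset (WLType Z k)

/-- The Weisfeiler–Lehman label hierarchy `ℓ^k` of a labeled graph. -/
def wlLabel {V Z : Type*} [Fintype V] (G : SimpleGraph V) [DecidableRel G.Adj] (ℓ : V → Z) :
    (k : ℕ) → V → WLType Z k
  | 0 => ℓ
  | k + 1 => fun v => (wlLabel G ℓ k v, (G.neighborFinset v).val.map (wlLabel G ℓ k))

/-- The multiset `L_k((G, ℓ))` of depth-`k` WL labels of all vertices. -/
def wlMultiset {V Z : Type*} [Fintype V] (G : SimpleGraph V) [DecidableRel G.Adj]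
    (ℓ : V → Z) (k : ℕ) : Multiset (WLType Z k) :=
  Finset.univ.val.map (wlLabel G ℓ k)

/-- The WL test distinguishes two labeled graphs. -/
def WLDistinguishes {V₁ V₂ Z : Type*} [Fintype V₁] [Fintype V₂]
    (G₁ : SimpleGraph V₁) [DecidableRel G₁.Adj] (ℓ₁ : V₁ → Z)
    (G₂ : SimpleGraph V₂) [DecidableRel G₂.Adj] (ℓ₂ : V₂ → Z) : Prop :=
  ∃ k, wlMultiset G₁ ℓ₁ k ≠ wlMultiset G₂ ℓ₂ k

/-- The relabeling `ℓ^g(v) = g(ℓ(v), deg v, |V|)`. -/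
def relabel {V Z Z₁ : Type*} [Fintype V] (G : SimpleGraph V) [DecidableRel G.Adj]
    (ℓ : V → Z) (g : Z × ℕ × ℕ → Z₁) : V → Z₁ :=
  fun v => g (ℓ v, G.degree v, Fintype.card V)

/-- `kpow m k = m^{⊗k}`, the `k`-step Markov kernel (`kpow m 0` is the identity kernel). -/
def kpow [Fintype X] [DecidableEq X] (m : X → X → ℝ) : ℕ → X → X → ℝ
  | 0 => fun x x' => if x' = x then 1 else 0
  | k + 1 => fun x x'' => ∑ x', kpow m k x' x'' * m x x'

/-- The Wasserstein distance between the pushforwards `(ℓX)_# p` and `(ℓY)_# q`, expressed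
through couplings of `p` and `q`. -/
noncomputable def wassersteinCost {Z : Type*} [PseudoMetricSpace Z] [Fintype X] [Fintype Y]
    (ℓX : X → Z) (ℓY : Y → Z) (p : X → ℝ) (q : Y → ℝ) : ℝ :=
  sInf {r : ℝ | ∃ γ : X → Y → ℝ, IsCoupling p q γ ∧
      r = ∑ x, ∑ y, dist (ℓX x) (ℓY y) * γ x y}

/-- The lower bound `d_WLLB^(k)` for the WL distance. -/
noncomputable def dWLLB {Z : Type*} [PseudoMetricSpace Z] [Fintype X] [Fintype Y]
    [DecidableEq X] [DecidableEq Y]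
    (mX : X → X → ℝ) (μX : X → ℝ) (ℓX : X → Z)
    (mY : Y → Y → ℝ) (μY : Y → ℝ) (ℓY : Y → Z) (k : ℕ) : ℝ :=
  sInf {r : ℝ | ∃ γ : X → Y → ℝ, IsCoupling μX μY γ ∧
      r = ∑ x, ∑ y, wassersteinCost ℓX ℓY (kpow mX k x) (kpow mY k y) * γ x y}

/-- Dimension sequence of an MCNN: `mcnnDim d dims 0 = d`, then `dims`. -/
def mcnnDim (d : ℕ) (dims : ℕ → ℕ) : ℕ → ℕ
  | 0 => d
  | i + 1 => dims i

/-- A `k`-layer Markov chain neural network on `ℝ^d`-LMMCs: Lipschitz maps `φ_1, …, φ_{k+1}`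
followed by a continuous map `ψ`. -/
structure MCNN (d k : ℕ) where
  dims : ℕ → ℕ
  φ : (i : ℕ) → EuclideanSpace ℝ (Fin (mcnnDim d dims i)) →
      EuclideanSpace ℝ (Fin (mcnnDim d dims (i + 1)))
  φ_lip : ∀ i, ∃ K : ℝ≥0, LipschitzWith K (φ i)
  ψ : EuclideanSpace ℝ (Fin (mcnnDim d dims (k + 1))) → ℝ
  ψ_cont : Continuous ψ

/-- Labels after `j` layers of an MCNN (the map `F_{φ_j} ∘ ⋯ ∘ F_{φ_1}`). -/
noncomputable def mcnnLabel {X : Type*} [Fintype X] {d k : ℕ} (N : MCNN d k)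
    (m : X → X → ℝ) (ℓ : X → EuclideanSpace ℝ (Fin d)) :
    (j : ℕ) → X → EuclideanSpace ℝ (Fin (mcnnDim d N.dims j))
  | 0 => ℓ
  | j + 1 => fun x => ∑ x', m x x' • N.φ j (mcnnLabel N m ℓ j x')

/-- Evaluation of an MCNN on an `ℝ^d`-LMMC: `ψ ∘ S_{φ_{k+1}} ∘ F_{φ_k} ∘ ⋯ ∘ F_{φ_1}`. -/
noncomputable def mcnnEval {X : Type*} [Fintype X] {d k : ℕ} (N : MCNN d k)
    (m : X → X → ℝ) (μ : X → ℝ) (ℓ : X → EuclideanSpace ℝ (Fin d)) : ℝ :=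
  N.ψ (∑ x, μ x • N.φ k (mcnnLabel N m ℓ k x))

/-- `k`-step couplings between the Markov kernels `mX` and `mY` (defined for `k ≥ 1`). -/
def IsStepCoupling [Fintype X] [Fintype Y] (mX : X → X → ℝ) (mY : Y → Y → ℝ) :
    ℕ → (X → Y → X → Y → ℝ) → Prop
  | 0, _ => False
  | 1, ν => ∀ x y, IsCoupling (mX x) (mY y) (ν x y)
  | k + 2, ν => ∃ νk ν1 : X → Y → X → Y → ℝ,
      IsStepCoupling mX mY (k + 1) νk ∧ (∀ x y, IsCoupling (mX x) (mY y) (ν1 x y)) ∧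
      ν = fun x y x' y' => ∑ x'', ∑ y'', νk x'' y'' x' y' * ν1 x y x'' y''

/-- The `k`-distortion `dis^(k)(γ, ν)`. -/
def disk [Fintype X] [Fintype Y] (dX : X → X → ℝ) (dY : Y → Y → ℝ)
    (γ : X → Y → ℝ) (ν : X → Y → X → Y → ℝ) : ℝ :=
  ∑ x, ∑ y, ∑ x'', ∑ y'', ∑ x', ∑ y',
    |dX x x' - dY y y'| * ν x'' y'' x' y' * γ x'' y'' * γ x y

/-- The `k`-Gromov–Wasserstein distance between Markov chain metric spaces. -/
noncomputable def dGWk [Fintype X] [Fintype Y]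
    (mX : X → X → ℝ) (dX : X → X → ℝ) (μX : X → ℝ)
    (mY : Y → Y → ℝ) (dY : Y → Y → ℝ) (μY : Y → ℝ) (k : ℕ) : ℝ :=
  sInf {r : ℝ | ∃ (γ : X → Y → ℝ) (ν : X → Y → X → Y → ℝ),
      IsCoupling μX μY γ ∧ IsStepCoupling mX mY k ν ∧ r = disk dX dY γ ν}

/-- The absolute Gromov–Wasserstein distance between MCMSs: `sup_{k ≥ 1} d_GW^(k)`. -/
noncomputable def dGWMCMS [Fintype X] [Fintype Y]
    (mX : X → X → ℝ) (dX : X → X → ℝ) (μX : X → ℝ)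
    (mY : Y → Y → ℝ) (dY : Y → Y → ℝ) (μY : Y → ℝ) : ℝ :=
  ⨆ k : ℕ, dGWk mX dX μX mY dY μY (k + 1)

/-- Isomorphism of Markov chain metric spaces. -/
def MCMSIso [Fintype X] [Fintype Y]
    (mX : X → X → ℝ) (dX : X → X → ℝ) (μX : X → ℝ)
    (mY : Y → Y → ℝ) (dY : Y → Y → ℝ) (μY : Y → ℝ) : Prop :=
  ∃ ψ : X ≃ Y, (∀ x x', dY (ψ x) (ψ x') = dX x x') ∧
    (∀ x x', mY (ψ x) (ψ x') = mX x x') ∧ (∀ x, μY (ψ x) = μX x)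

/-- The decoupled Gromov–Wasserstein distance between finite metric measure spaces. -/
noncomputable def dGWbi [Fintype X] [Fintype Y]
    (dX : X → X → ℝ) (μX : X → ℝ) (dY : Y → Y → ℝ) (μY : Y → ℝ) : ℝ :=
  sInf {r : ℝ | ∃ γ γ' : X → Y → ℝ, IsCoupling μX μY γ ∧ IsCoupling μX μY γ' ∧
      r = ∑ x, ∑ y, ∑ x', ∑ y', |dX x x' - dY y y'| * γ' x' y' * γ x y}

/-- `k`-step couplings between the measures `μX` and `μY`
(`k = 0` gives ordinary couplings). -/
def IsMeasureStepCoupling [Fintype X] [Fintype Y] (mX : X → X → ℝ) (mY : Y → Y → ℝ)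
    (μX : X → ℝ) (μY : Y → ℝ) : ℕ → (X → Y → ℝ) → Prop
  | 0, γ => IsCoupling μX μY γ
  | k + 1, γk => ∃ (γ : X → Y → ℝ) (ν : X → Y → X → Y → ℝ),
      IsCoupling μX μY γ ∧ IsStepCoupling mX mY (k + 1) ν ∧
      γk = fun x' y' => ∑ x, ∑ y, ν x y x' y' * γ x y

/-- The WWL label iteration. -/
noncomputable def wwlLabel {V : Type*} [Fintype V] {d : ℕ} (G : SimpleGraph V)
    [DecidableRel G.Adj] (ℓ : V → EuclideanSpace ℝ (Fin d)) :
    ℕ → V → EuclideanSpace ℝ (Fin d)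
  | 0 => ℓ
  | i + 1 => fun v => (1 / 2 : ℝ) •
      (wwlLabel G ℓ i v + ((G.degree v : ℝ))⁻¹ • ∑ v' ∈ G.neighborFinset v, wwlLabel G ℓ i v')

/-- The stacked WWL label `L^k_G = (ℓ^0, …, ℓ^k)`, valued in Euclidean `ℝ^{d(k+1)}`. -/
noncomputable def stackedLabel {V : Type*} [Fintype V] {d : ℕ} (G : SimpleGraph V)
    [DecidableRel G.Adj] (ℓ : V → EuclideanSpace ℝ (Fin d)) (k : ℕ) (v : V) :
    EuclideanSpace ℝ (Fin (k + 1) × Fin d) :=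
  WithLp.toLp 2 (fun p : Fin (k + 1) × Fin d => wwlLabel G ℓ (p.1 : ℕ) v p.2)

/-!
Each `D_k` and each `d_WL^(k)` is an optimal transport cost whose ground cost is the previous
level, so all properties follow by induction on `k` from those of optimal transport:
nonnegativity and symmetry are immediate, an isomorphism yields a coupling of cost zero, and the
triangle inequality is the gluing lemma. The supremum inherits them because every `d_WL^(k)` is
bounded by the largest distance between labels.
-/

section Transport

variable [Fintype X] [Fintype Y] [Fintype W]

def couplingCosts (p : X → ℝ) (q : Y → ℝ) (c : X → Y → ℝ) : Set ℝ :=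
  {r : ℝ | ∃ γ : X → Y → ℝ, IsCoupling p q γ ∧ r = ∑ x, ∑ y, c x y * γ x y}

/-- `costIter _ _ _ (k + 1) x y` and `dWL` unfold definitionally to `transportCost`. -/
noncomputable def transportCost (p : X → ℝ) (q : Y → ℝ) (c : X → Y → ℝ) : ℝ :=
  sInf (couplingCosts p q c)

lemma IsPMF.isCoupling_mul {p : X → ℝ} {q : Y → ℝ} (hp : IsPMF p) (hq : IsPMF q) :
    IsCoupling p q fun x y => p x * q y :=
  ⟨fun x y => mul_nonneg (hp.1 x) (hq.1 y),
    fun x => by rw [← Finset.mul_sum, hq.2, mul_one],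
    fun y => by rw [← Finset.sum_mul, hp.2, one_mul]⟩

namespace IsCoupling

variable {p : X → ℝ} {q : Y → ℝ} {r : W → ℝ} {γ : X → Y → ℝ}

lemma symm (hγ : IsCoupling p q γ) : IsCoupling q p fun y x => γ x y :=
  ⟨fun y x => hγ.1 x y, hγ.2.2, hγ.2.1⟩

lemma eq_zero_of_right (hγ : IsCoupling p q γ) {y : Y} (hy : q y = 0) (x : X) : γ x y = 0 :=
  (Finset.sum_eq_zero_iff_of_nonneg fun x _ => hγ.1 x y).mp
    ((hγ.2.2 y).trans hy) x (Finset.mem_univ x)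

lemma eq_zero_of_left (hγ : IsCoupling p q γ) {x : X} (hx : p x = 0) (y : Y) : γ x y = 0 :=
  hγ.symm.eq_zero_of_right hx y

lemma right_nonneg (hγ : IsCoupling p q γ) (y : Y) : 0 ≤ q y :=
  hγ.2.2 y ▸ Finset.sum_nonneg fun x _ => hγ.1 x y

/-- The division by `q y` is harmless: both couplings vanish wherever `q` does. -/
noncomputable def gluing (q : Y → ℝ) (γ : X → Y → ℝ) (η : Y → W → ℝ) (x : X) (y : Y) (w : W) :
    ℝ :=
  γ x y * η y w / q y

variable {η : Y → W → ℝ}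

lemma gluing_nonneg (hγ : IsCoupling p q γ) (hη : IsCoupling q r η) (x : X) (y : Y) (w : W) :
    0 ≤ gluing q γ η x y w :=
  div_nonneg (mul_nonneg (hγ.1 x y) (hη.1 y w)) (hγ.right_nonneg y)

lemma sum_gluing_right (hγ : IsCoupling p q γ) (hη : IsCoupling q r η) (x : X) (y : Y) :
    ∑ w, gluing q γ η x y w = γ x y := by
  by_cases hy : q y = 0
  · simpa [gluing, hy] using (hγ.eq_zero_of_right hy x).symm
  · simp only [gluing, mul_div_assoc, ← Finset.mul_sum, ← Finset.sum_div, hη.2.1 y,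
      div_self hy, mul_one]

lemma sum_gluing_left (hγ : IsCoupling p q γ) (hη : IsCoupling q r η) (y : Y) (w : W) :
    ∑ x, gluing q γ η x y w = η y w := by
  by_cases hy : q y = 0
  · simpa [gluing, hy] using (hη.eq_zero_of_left hy w).symm
  · simp only [gluing, mul_div_right_comm, ← Finset.sum_mul, ← Finset.sum_div, hγ.2.2 y,
      div_self hy, one_mul]

lemma glue (hγ : IsCoupling p q γ) (hη : IsCoupling q r η) :
    IsCoupling p r fun x w => ∑ y, gluing q γ η x y w := by
  refine ⟨fun x w => Finset.sum_nonneg fun y _ => gluing_nonneg hγ hη x y w,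
    fun x => ?_, fun w => ?_⟩
  · rw [Finset.sum_comm]
    simp only [sum_gluing_right hγ hη, hγ.2.1 x]
  · rw [Finset.sum_comm]
    simp only [sum_gluing_left hγ hη, hη.2.2 w]

lemma cost_glue_le (hγ : IsCoupling p q γ) (hη : IsCoupling q r η)
    {cXY : X → Y → ℝ} {cYW : Y → W → ℝ} {cXW : X → W → ℝ}
    (htri : ∀ x y w, cXW x w ≤ cXY x y + cYW y w) :
    ∑ x, ∑ w, cXW x w * ∑ y, gluing q γ η x y w
      ≤ ∑ x, ∑ y, cXY x y * γ x y + ∑ y, ∑ w, cYW y w * η y w :=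
  calc ∑ x, ∑ w, cXW x w * ∑ y, gluing q γ η x y w
      = ∑ x, ∑ w, ∑ y, cXW x w * gluing q γ η x y w := by simp only [Finset.mul_sum]
    _ ≤ ∑ x, ∑ w, ∑ y, (cXY x y + cYW y w) * gluing q γ η x y w := by
        gcongr with x _ w _ y _
        · exact gluing_nonneg hγ hη x y w
        · exact htri x y w
    _ = ∑ x, ∑ y, cXY x y * ∑ w, gluing q γ η x y w
          + ∑ y, ∑ w, cYW y w * ∑ x, gluing q γ η x y w := by
        simp only [add_mul, Finset.sum_add_distrib, Finset.mul_sum]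
        congr 1
        · exact Finset.sum_congr rfl fun x _ => Finset.sum_comm
        · refine (Finset.sum_congr rfl fun x _ => Finset.sum_comm).trans ?_
          rw [Finset.sum_comm]
          exact Finset.sum_congr rfl fun y _ => Finset.sum_comm
    _ = ∑ x, ∑ y, cXY x y * γ x y + ∑ y, ∑ w, cYW y w * η y w := by
        simp only [sum_gluing_right hγ hη, sum_gluing_left hγ hη]

end IsCoupling

variable {p : X → ℝ} {q : Y → ℝ} {r : W → ℝ} {c : X → Y → ℝ}

lemma nonneg_of_mem_couplingCosts (hc : ∀ x y, 0 ≤ c x y) :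
    ∀ r ∈ couplingCosts p q c, 0 ≤ r := by
  rintro _ ⟨γ, hγ, rfl⟩
  exact Finset.sum_nonneg fun x _ => Finset.sum_nonneg fun y _ => mul_nonneg (hc x y) (hγ.1 x y)

lemma transportCost_nonneg (hc : ∀ x y, 0 ≤ c x y) : 0 ≤ transportCost p q c :=
  Real.sInf_nonneg (nonneg_of_mem_couplingCosts hc)

lemma transportCost_le {γ : X → Y → ℝ} (hc : ∀ x y, 0 ≤ c x y) (hγ : IsCoupling p q γ) :
    transportCost p q c ≤ ∑ x, ∑ y, c x y * γ x y :=
  csInf_le ⟨0, nonneg_of_mem_couplingCosts hc⟩ ⟨γ, hγ, rfl⟩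

lemma transportCost_le_of_le {C : ℝ} (hp : IsPMF p) (hq : IsPMF q)
    (hc : ∀ x y, 0 ≤ c x y) (hcC : ∀ x y, c x y ≤ C) : transportCost p q c ≤ C :=
  calc transportCost p q c ≤ ∑ x, ∑ y, c x y * (p x * q y) :=
        transportCost_le hc (hp.isCoupling_mul hq)
    _ ≤ ∑ x, ∑ y, C * (p x * q y) := by
        gcongr with x _ y _
        · exact mul_nonneg (hp.1 x) (hq.1 y)
        · exact hcC x y
    _ = C := by simp only [← Finset.mul_sum, hq.2, hp.2, mul_one]

lemma couplingCosts_comm {c' : Y → X → ℝ} (hc : ∀ x y, c x y = c' y x) :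
    couplingCosts p q c = couplingCosts q p c' := by
  ext r
  constructor
  · rintro ⟨γ, hγ, rfl⟩
    exact ⟨fun y x => γ x y, hγ.symm, by rw [Finset.sum_comm]; simp only [hc]⟩
  · rintro ⟨γ, hγ, rfl⟩
    exact ⟨fun x y => γ y x, hγ.symm, by rw [Finset.sum_comm]; simp only [hc]⟩

lemma transportCost_comm {c' : Y → X → ℝ} (hc : ∀ x y, c x y = c' y x) :
    transportCost p q c = transportCost q p c' :=
  congrArg sInf (couplingCosts_comm hc)

lemma transportCost_triangle {cXY : X → Y → ℝ} {cYW : Y → W → ℝ} {cXW : X → W → ℝ}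
    (hp : IsPMF p) (hq : IsPMF q) (hr : IsPMF r) (h0XW : ∀ x w, 0 ≤ cXW x w)
    (htri : ∀ x y w, cXW x w ≤ cXY x y + cYW y w) :
    transportCost p r cXW ≤ transportCost p q cXY + transportCost q r cYW := by
  refine le_of_forall_pos_le_add fun ε hε => ?_
  obtain ⟨_, ⟨γ, hγ, rfl⟩, hγε⟩ := Real.lt_sInf_add_pos (s := couplingCosts p q cXY)
    ⟨_, _, hp.isCoupling_mul hq, rfl⟩ (half_pos hε)
  obtain ⟨_, ⟨η, hη, rfl⟩, hηε⟩ := Real.lt_sInf_add_pos (s := couplingCosts q r cYW)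
    ⟨_, _, hq.isCoupling_mul hr, rfl⟩ (half_pos hε)
  have := (transportCost_le h0XW (hγ.glue hη)).trans (hγ.cost_glue_le hη htri)
  change _ < transportCost p q cXY + _ at hγε
  change _ < transportCost q r cYW + _ at hηε
  linarith

lemma transportCost_eq_zero_of_equiv (ψ : X ≃ Y) (hp : IsPMF p) (hq : ∀ x, q (ψ x) = p x)
    (hc : ∀ x y, 0 ≤ c x y) (hψ : ∀ x, c x (ψ x) = 0) : transportCost p q c = 0 := by
  classical
  have hcoup : IsCoupling p q fun x y => if y = ψ x then p x else 0 := by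
    refine ⟨fun x y => by dsimp only; split_ifs <;> simp [hp.1 x], fun x => by simp, fun y => ?_⟩
    have hψy : ∀ x, y = ψ x ↔ x = ψ.symm y := fun x => eq_comm.trans ψ.eq_symm_apply.symm
    simp only [hψy, Finset.sum_ite_eq', Finset.mem_univ, if_true, ← hq, ψ.apply_symm_apply]
  refine le_antisymm ((transportCost_le hc hcoup).trans_eq ?_) (transportCost_nonneg hc)
  refine Finset.sum_eq_zero fun x _ => Finset.sum_eq_zero fun y _ => ?_
  by_cases h : y = ψ x <;> simp [h, hψ]

end Transport

section CostIter

variable [Fintype X] [Fintype Y] [Fintype W] {mX : X → X → ℝ} {mY : Y → Y → ℝ} {mW : W → W → ℝ}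

lemma costIter_nonneg {D0 : X → Y → ℝ} (h0 : ∀ x y, 0 ≤ D0 x y) (k : ℕ) (x : X) (y : Y) :
    0 ≤ costIter mX mY D0 k x y := by
  induction k generalizing x y with
  | zero => exact h0 x y
  | succ k ih => exact transportCost_nonneg ih

lemma costIter_le {D0 : X → Y → ℝ} {C : ℝ} (hmX : ∀ x, IsPMF (mX x)) (hmY : ∀ y, IsPMF (mY y))
    (h0 : ∀ x y, 0 ≤ D0 x y) (hC : ∀ x y, D0 x y ≤ C) (k : ℕ) (x : X) (y : Y) :
    costIter mX mY D0 k x y ≤ C := by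
  induction k generalizing x y with
  | zero => exact hC x y
  | succ k ih => exact transportCost_le_of_le (hmX x) (hmY y) (costIter_nonneg h0 k) ih

lemma costIter_comm {D0 : X → Y → ℝ} {D0' : Y → X → ℝ} (h : ∀ x y, D0 x y = D0' y x)
    (k : ℕ) (x : X) (y : Y) : costIter mX mY D0 k x y = costIter mY mX D0' k y x := by
  induction k generalizing x y with
  | zero => exact h x y
  | succ k ih => exact transportCost_comm ih

lemma costIter_triangle {DXY : X → Y → ℝ} {DYW : Y → W → ℝ} {DXW : X → W → ℝ}
    (hmX : ∀ x, IsPMF (mX x)) (hmY : ∀ y, IsPMF (mY y)) (hmW : ∀ w, IsPMF (mW w))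
    (h0 : ∀ x w, 0 ≤ DXW x w) (htri : ∀ x y w, DXW x w ≤ DXY x y + DYW y w)
    (k : ℕ) (x : X) (y : Y) (w : W) :
    costIter mX mW DXW k x w ≤ costIter mX mY DXY k x y + costIter mY mW DYW k y w := by
  induction k generalizing x y w with
  | zero => exact htri x y w
  | succ k ih =>
    exact transportCost_triangle (hmX x) (hmY y) (hmW w) (costIter_nonneg h0 k) ih

lemma costIter_apply_equiv_eq_zero {D0 : X → Y → ℝ} (ψ : X ≃ Y) (hmX : ∀ x, IsPMF (mX x))
    (hm : ∀ x x', mY (ψ x) (ψ x') = mX x x') (h0 : ∀ x y, 0 ≤ D0 x y)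
    (hD : ∀ x, D0 x (ψ x) = 0) (k : ℕ) (x : X) : costIter mX mY D0 k x (ψ x) = 0 := by
  induction k generalizing x with
  | zero => exact hD x
  | succ k ih =>
    exact transportCost_eq_zero_of_equiv ψ (hmX x) (hm x) (costIter_nonneg h0 k) ih

end CostIter

section WL

variable {Z : Type*} [PseudoMetricSpace Z] [Fintype X] [Fintype Y] [Fintype W]
  {mX : X → X → ℝ} {μX : X → ℝ} {ℓX : X → Z} {mY : Y → Y → ℝ} {μY : Y → ℝ} {ℓY : Y → Z}
  {mW : W → W → ℝ} {μW : W → ℝ} {ℓW : W → Z} {k : ℕ}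

lemma dWL_nonneg : 0 ≤ dWL mX μX ℓX mY μY ℓY k :=
  transportCost_nonneg (costIter_nonneg (fun _ _ => dist_nonneg) k)

lemma dWL_comm : dWL mX μX ℓX mY μY ℓY k = dWL mY μY ℓY mX μX ℓX k :=
  transportCost_comm (costIter_comm (fun x y => dist_comm (ℓX x) (ℓY y)) k)

lemma dWL_triangle (hmX : ∀ x, IsPMF (mX x)) (hmY : ∀ y, IsPMF (mY y))
    (hmW : ∀ w, IsPMF (mW w)) (hμX : IsPMF μX) (hμY : IsPMF μY) (hμW : IsPMF μW) :
    dWL mX μX ℓX mW μW ℓW k ≤ dWL mX μX ℓX mY μY ℓY k + dWL mY μY ℓY mW μW ℓW k :=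
  transportCost_triangle hμX hμY hμW (costIter_nonneg (fun _ _ => dist_nonneg) k)
    (costIter_triangle hmX hmY hmW (fun _ _ => dist_nonneg)
      (fun x y w => dist_triangle (ℓX x) (ℓY y) (ℓW w)) k)

lemma dWL_eq_zero_of_iso (hmX : ∀ x, IsPMF (mX x)) (hμX : IsPMF μX)
    (h : LMMCIso mX μX ℓX mY μY ℓY) : dWL mX μX ℓX mY μY ℓY k = 0 := by
  obtain ⟨ψ, hℓ, hm, hμ⟩ := h
  exact transportCost_eq_zero_of_equiv ψ hμX hμ (costIter_nonneg (fun _ _ => dist_nonneg) k)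
    (costIter_apply_equiv_eq_zero ψ hmX hm (fun _ _ => dist_nonneg)
      (fun x => by rw [hℓ, dist_self]) k)

/-- Every `dWL` is bounded by the largest distance between labels, so `dWLsup` is a genuine
supremum rather than the junk value of an unbounded `⨆`. -/
lemma bddAbove_range_dWL (hmX : ∀ x, IsPMF (mX x)) (hmY : ∀ y, IsPMF (mY y))
    (hμX : IsPMF μX) (hμY : IsPMF μY) :
    BddAbove (Set.range fun k => dWL mX μX ℓX mY μY ℓY k) := by
  obtain ⟨C, hC⟩ := (Set.finite_range fun p : X × Y => dist (ℓX p.1) (ℓY p.2)).bddAbove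
  have hdist : ∀ x y, dist (ℓX x) (ℓY y) ≤ C := fun x y => hC ⟨(x, y), rfl⟩
  refine ⟨C, ?_⟩
  rintro _ ⟨k, rfl⟩
  exact transportCost_le_of_le hμX hμY (costIter_nonneg (fun _ _ => dist_nonneg) k)
    (costIter_le hmX hmY (fun _ _ => dist_nonneg) hdist k)

lemma dWLsup_nonneg : 0 ≤ dWLsup mX μX ℓX mY μY ℓY :=
  Real.iSup_nonneg fun _ => dWL_nonneg

lemma dWLsup_comm : dWLsup mX μX ℓX mY μY ℓY = dWLsup mY μY ℓY mX μX ℓX :=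
  iSup_congr fun _ => dWL_comm

lemma dWLsup_triangle (hmX : ∀ x, IsPMF (mX x)) (hmY : ∀ y, IsPMF (mY y))
    (hmW : ∀ w, IsPMF (mW w)) (hμX : IsPMF μX) (hμY : IsPMF μY) (hμW : IsPMF μW) :
    dWLsup mX μX ℓX mW μW ℓW ≤ dWLsup mX μX ℓX mY μY ℓY + dWLsup mY μY ℓY mW μW ℓW :=
  ciSup_le fun k => (dWL_triangle hmX hmY hmW hμX hμY hμW).trans <|
    add_le_add (le_ciSup (bddAbove_range_dWL hmX hmY hμX hμY) k)
      (le_ciSup (bddAbove_range_dWL hmY hmW hμY hμW) k)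

lemma dWLsup_eq_zero_of_iso (hmX : ∀ x, IsPMF (mX x)) (hμX : IsPMF μX)
    (h : LMMCIso mX μX ℓX mY μY ℓY) : dWLsup mX μX ℓX mY μY ℓY = 0 := by
  simp only [dWLsup, dWL_eq_zero_of_iso hmX hμX h, ciSup_const]

end WL

theorem dWL_pseudometric {X Y W Z : Type*} [Fintype X] [Fintype Y] [Fintype W] [MetricSpace Z]
    (k : ℕ)
    (mX : X → X → ℝ) (μX : X → ℝ) (ℓX : X → Z)
    (mY : Y → Y → ℝ) (μY : Y → ℝ) (ℓY : Y → Z)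
    (mW : W → W → ℝ) (μW : W → ℝ) (ℓW : W → Z)
    (hX : IsMMC mX μX) (hY : IsMMC mY μY) (hW : IsMMC mW μW) :
    (0 ≤ dWL mX μX ℓX mY μY ℓY k) ∧
    (dWL mX μX ℓX mY μY ℓY k = dWL mY μY ℓY mX μX ℓX k) ∧
    (dWL mX μX ℓX mW μW ℓW k ≤ dWL mX μX ℓX mY μY ℓY k + dWL mY μY ℓY mW μW ℓW k) ∧
    (LMMCIso mX μX ℓX mY μY ℓY → dWL mX μX ℓX mY μY ℓY k = 0) ∧
    (0 ≤ dWLsup mX μX ℓX mY μY ℓY) ∧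
    (dWLsup mX μX ℓX mY μY ℓY = dWLsup mY μY ℓY mX μX ℓX) ∧
    (dWLsup mX μX ℓX mW μW ℓW ≤ dWLsup mX μX ℓX mY μY ℓY + dWLsup mY μY ℓY mW μW ℓW) ∧
    (LMMCIso mX μX ℓX mY μY ℓY → dWLsup mX μX ℓX mY μY ℓY = 0) :=
  ⟨dWL_nonneg, dWL_comm, dWL_triangle hX.1 hY.1 hW.1 hX.2.1 hY.2.1 hW.2.1,
    dWL_eq_zero_of_iso hX.1 hX.2.1, dWLsup_nonneg, dWLsup_comm,
    dWLsup_triangle hX.1 hY.1 hW.1 hX.2.1 hY.2.1 hW.2.1, dWLsup_eq_zero_of_iso hX.1 hX.2.1⟩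

end WLGW
end

section
/- Let Z and Z₁ be metric spaces and let g : Z × ℕ × ℕ → Z₁ be an injective map. For any two labeled graphs (G₁, ℓ_{G₁} : V_{G₁} → Z) and (G₂, ℓ_{G₂} : V_{G₂} → Z), the Weisfeiler–Lehman test distinguishes (G₁, ℓ_{G₁}) and (G₂, ℓ_{G₂}) if and only if it distinguishes the relabeled graphs (G₁, ℓ_{G₁}^g) and (G₂, ℓ_{G₂}^g). -/
open scoped BigOperators NNReal

namespace WLGW

variable {X Y W : Type*}

/-!
Since `g` is injective, `ℓ^g = g ∘ (v ↦ (ℓ v, deg v, |V|))` is WL-equivalent to the labeling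
`v ↦ (ℓ v, deg v, |V|)`. That labeling refines `ℓ`; conversely, its depth-`k` WL labels are
determined by the depth-`(k + 1)` WL labels of `ℓ` (a degree is the size of a neighbour
multiset) together with `|V|`, which is the size of `L_0`.
-/

def wlMap {Z Z' : Type*} (h : Z → Z') : (k : ℕ) → WLType Z k → WLType Z' k
  | 0 => h
  | k + 1 => fun p => (wlMap h k p.1, p.2.map (wlMap h k))

theorem wlMap_injective {Z Z' : Type*} {h : Z → Z'} (hh : Function.Injective h) :
    ∀ k, Function.Injective (wlMap h k)
  | 0 => hh
  | k + 1 => fun _ _ hpq =>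
    Prod.ext (wlMap_injective hh k (congrArg Prod.fst hpq))
      (Multiset.map_injective (wlMap_injective hh k) (congrArg Prod.snd hpq))

section

variable {V V₁ V₂ Z Z' : Type*} [Fintype V] [Fintype V₁] [Fintype V₂]

theorem wlLabel_comp (G : SimpleGraph V) [DecidableRel G.Adj] (ℓ : V → Z) (h : Z → Z') :
    ∀ k v, wlLabel G (h ∘ ℓ) k v = wlMap h k (wlLabel G ℓ k v)
  | 0, _ => rfl
  | k + 1, v => Prod.ext (wlLabel_comp G ℓ h k v)
    ((Multiset.map_congr rfl fun x _ => wlLabel_comp G ℓ h k x).trans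
      (Multiset.map_map _ _ _).symm)

theorem wlMultiset_comp (G : SimpleGraph V) [DecidableRel G.Adj] (ℓ : V → Z) (h : Z → Z')
    (k : ℕ) : wlMultiset G (h ∘ ℓ) k = (wlMultiset G ℓ k).map (wlMap h k) := by
  rw [wlMultiset, wlMultiset, Multiset.map_map]
  exact Multiset.map_congr rfl fun v _ => wlLabel_comp G ℓ h k v

theorem card_wlMultiset (G : SimpleGraph V) [DecidableRel G.Adj] (ℓ : V → Z) (k : ℕ) :
    Multiset.card (wlMultiset G ℓ k) = Fintype.card V := by
  simp [wlMultiset]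

variable (G₁ : SimpleGraph V₁) [DecidableRel G₁.Adj] (G₂ : SimpleGraph V₂) [DecidableRel G₂.Adj]

theorem not_wlDistinguishes_iff (ℓ₁ : V₁ → Z) (ℓ₂ : V₂ → Z) :
    ¬ WLDistinguishes G₁ ℓ₁ G₂ ℓ₂ ↔ ∀ k, wlMultiset G₁ ℓ₁ k = wlMultiset G₂ ℓ₂ k := by
  simp only [WLDistinguishes, not_exists, not_not]

theorem WLDistinguishes.of_comp {ℓ₁ : V₁ → Z} {ℓ₂ : V₂ → Z} {h : Z → Z'}
    (hd : WLDistinguishes G₁ (h ∘ ℓ₁) G₂ (h ∘ ℓ₂)) : WLDistinguishes G₁ ℓ₁ G₂ ℓ₂ := by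
  obtain ⟨k, hk⟩ := hd
  exact ⟨k, fun heq => hk (by rw [wlMultiset_comp, wlMultiset_comp, heq])⟩

theorem wlDistinguishes_comp_iff {h : Z → Z'} (hh : Function.Injective h)
    (ℓ₁ : V₁ → Z) (ℓ₂ : V₂ → Z) :
    WLDistinguishes G₁ (h ∘ ℓ₁) G₂ (h ∘ ℓ₂) ↔ WLDistinguishes G₁ ℓ₁ G₂ ℓ₂ := by
  refine ⟨WLDistinguishes.of_comp G₁ G₂, fun ⟨k, hk⟩ => ⟨k, fun heq => hk ?_⟩⟩
  rw [wlMultiset_comp, wlMultiset_comp] at heq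
  exact Multiset.map_injective (wlMap_injective hh k) heq

def degreeLabel (G : SimpleGraph V) [DecidableRel G.Adj] (ℓ : V → Z) : V → Z × ℕ × ℕ :=
  fun v => (ℓ v, G.degree v, Fintype.card V)

/-- With `n = |V|`, this reads a depth-`k` label of `degreeLabel` off a depth-`(k + 1)` label. -/
def attachDegree (n : ℕ) : (k : ℕ) → WLType Z (k + 1) → WLType (Z × ℕ × ℕ) k
  | 0 => fun p => (p.1, Multiset.card p.2, n)
  | k + 1 => fun p => (attachDegree n k p.1, p.2.map (attachDegree n k))

theorem wlLabel_degreeLabel (G : SimpleGraph V) [DecidableRel G.Adj] (ℓ : V → Z) :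
    ∀ k v, wlLabel G (degreeLabel G ℓ) k v
      = attachDegree (Fintype.card V) k (wlLabel G ℓ (k + 1) v)
  | 0, _ => Prod.ext rfl (Prod.ext (Multiset.card_map ℓ _).symm rfl)
  | k + 1, v => Prod.ext (wlLabel_degreeLabel G ℓ k v)
    ((Multiset.map_congr rfl fun x _ => wlLabel_degreeLabel G ℓ k x).trans
      (Multiset.map_map _ _ _).symm)

theorem wlMultiset_degreeLabel (G : SimpleGraph V) [DecidableRel G.Adj] (ℓ : V → Z) (k : ℕ) :
    wlMultiset G (degreeLabel G ℓ) k
      = (wlMultiset G ℓ (k + 1)).map (attachDegree (Fintype.card V) k) := by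
  rw [wlMultiset, wlMultiset, Multiset.map_map]
  exact Multiset.map_congr rfl fun v _ => wlLabel_degreeLabel G ℓ k v

theorem wlDistinguishes_degreeLabel_iff (ℓ₁ : V₁ → Z) (ℓ₂ : V₂ → Z) :
    WLDistinguishes G₁ (degreeLabel G₁ ℓ₁) G₂ (degreeLabel G₂ ℓ₂) ↔
      WLDistinguishes G₁ ℓ₁ G₂ ℓ₂ := by
  refine ⟨fun hd => ?_, WLDistinguishes.of_comp G₁ G₂ (h := Prod.fst)
    (ℓ₁ := degreeLabel G₁ ℓ₁) (ℓ₂ := degreeLabel G₂ ℓ₂)⟩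
  by_contra hnd
  rw [not_wlDistinguishes_iff] at hnd
  have hcard : Fintype.card V₁ = Fintype.card V₂ := by
    simpa only [card_wlMultiset] using congrArg Multiset.card (hnd 0)
  refine (not_wlDistinguishes_iff G₁ G₂ _ _).mpr (fun k => ?_) hd
  rw [wlMultiset_degreeLabel, wlMultiset_degreeLabel, hnd, hcard]

end

theorem wl_test_relabel_general {V₁ V₂ Z Z₁ : Type*} [Fintype V₁] [Fintype V₂]
    (g : Z × ℕ × ℕ → Z₁) (hg : Function.Injective g)
    (G₁ : SimpleGraph V₁) [DecidableRel G₁.Adj] (ℓ₁ : V₁ → Z)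
    (G₂ : SimpleGraph V₂) [DecidableRel G₂.Adj] (ℓ₂ : V₂ → Z) :
    WLDistinguishes G₁ ℓ₁ G₂ ℓ₂ ↔
      WLDistinguishes G₁ (relabel G₁ ℓ₁ g) G₂ (relabel G₂ ℓ₂ g) :=
  (wlDistinguishes_degreeLabel_iff G₁ G₂ ℓ₁ ℓ₂).symm.trans
    (wlDistinguishes_comp_iff G₁ G₂ hg _ _).symm

theorem wl_test_relabel {V₁ V₂ Z Z₁ : Type*} [Fintype V₁] [Fintype V₂]
    [MetricSpace Z] [MetricSpace Z₁]
    (g : Z × ℕ × ℕ → Z₁) (hg : Function.Injective g)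
    (G₁ : SimpleGraph V₁) [DecidableRel G₁.Adj] (ℓ₁ : V₁ → Z)
    (G₂ : SimpleGraph V₂) [DecidableRel G₂.Adj] (ℓ₂ : V₂ → Z) :
    WLDistinguishes G₁ ℓ₁ G₂ ℓ₂ ↔
      WLDistinguishes G₁ (relabel G₁ ℓ₁ g) G₂ (relabel G₂ ℓ₂ g) :=
  wl_test_relabel_general g hg G₁ ℓ₁ G₂ ℓ₂

end WLGW
end
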